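/- Let A be an algebra and let I be a left ideal of A such that there exist a, b ∈ A \ I with ba ∈ I and Ia ⊆ I. Then I is not maximal among the left ideals of A that are not finitely generated. -/

import Mathlib

/-!
Both `I + A♯a` (it contains `a`) and `K = {c | ca ∈ I}` (it contains `b`) strictly contain `I`,
so by maximality they are finitely generated. Splitting generators of `I + A♯a` as `x + ℓ` with
`x ∈ I`, `ℓ ∈ A♯a`, the `x`'s generate `I` modulo `I ∩ A♯a` by the modular law. As `Aa` has
codimension at most one in `A♯a`, `I ∩ A♯a` is `I ∩ Aa = Ka` plus at most one vector, and `Ka`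
is generated by `Ya` when `Y` generates `K`. So `I` is finitely generated after all.
-/

noncomputable section

/-- A left ideal of an algebra `A`, encoded as a `ℂ`-submodule closed under
left multiplication by arbitrary elements of `A`. -/
def IsLeftIdeal {A : Type*} [NonUnitalNonAssocSemiring A] [Module ℂ A]
    (I : Submodule ℂ A) : Prop :=
  ∀ a : A, ∀ x ∈ I, a * x ∈ I

/-- The left ideal generated by a set `S` (equivalently `⟨S⟩ = A♯·S`). -/
def leftIdealGen {A : Type*} [NonUnitalNonAssocSemiring A] [Module ℂ A]
    (S : Set A) : Submodule ℂ A :=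
  sInf {I : Submodule ℂ A | IsLeftIdeal I ∧ S ⊆ ↑I}

/-- A left ideal is finitely generated if it is generated by a finite subset of itself. -/
def IsFGLeftIdeal {A : Type*} [NonUnitalNonAssocSemiring A] [Module ℂ A]
    (I : Submodule ℂ A) : Prop :=
  ∃ S : Finset A, ↑S ⊆ (I : Set A) ∧ leftIdealGen (↑S : Set A) = I

/-- A left ideal is countably generated if it is generated by a countable subset of itself. -/
def IsCGLeftIdeal {A : Type*} [NonUnitalNonAssocSemiring A] [Module ℂ A]
    (I : Submodule ℂ A) : Prop :=
  ∃ S : Set A, S.Countable ∧ S ⊆ (I : Set A) ∧ leftIdealGen S = I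

/-- Membership in `𝔐∞(A)`: a maximal element of the family of
non-finitely-generated left ideals. -/
def IsMaxNonFG {A : Type*} [NonUnitalNonAssocSemiring A] [Module ℂ A]
    (M : Submodule ℂ A) : Prop :=
  IsLeftIdeal M ∧ ¬ IsFGLeftIdeal M ∧
    ∀ J : Submodule ℂ A, IsLeftIdeal J → ¬ IsFGLeftIdeal J → M ≤ J → J = M

/-- Membership in `𝔑∞(A)`: a maximal element of the family of
non-countably-generated left ideals. -/
def IsMaxNonCG {A : Type*} [NonUnitalNonAssocSemiring A] [Module ℂ A]
    (M : Submodule ℂ A) : Prop :=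
  IsLeftIdeal M ∧ ¬ IsCGLeftIdeal M ∧
    ∀ J : Submodule ℂ A, IsLeftIdeal J → ¬ IsCGLeftIdeal J → M ≤ J → J = M

/-- `M` is a maximal left ideal. -/
def IsMaxLeftIdeal {A : Type*} [NonUnitalNonAssocSemiring A] [Module ℂ A]
    (M : Submodule ℂ A) : Prop :=
  IsLeftIdeal M ∧ M ≠ ⊤ ∧ ∀ J : Submodule ℂ A, IsLeftIdeal J → M < J → J = ⊤

theorem Submodule.exists_finset_le_inf_sup_span_of_le_sup_span_singleton
    {K V : Type*} [DivisionRing K] [AddCommGroup V] [Module K V]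
    {W U : Submodule K V} {v : V} (h : W ≤ U ⊔ K ∙ v) :
    ∃ E : Finset V, ↑E ⊆ (W : Set V) ∧ W ≤ W ⊓ U ⊔ Submodule.span K ↑E := by
  by_cases hWU : W ≤ U
  · exact ⟨∅, by simp, by simpa using hWU⟩
  obtain ⟨w, hwW, hwU⟩ := SetLike.not_le_iff_exists.1 hWU
  obtain ⟨u₀, hu₀, _, hv, rfl⟩ := Submodule.mem_sup.1 (h hwW)
  obtain ⟨μ, rfl⟩ := Submodule.mem_span_singleton.1 hv
  have hμ : μ ≠ 0 := by
    rintro rfl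
    exact hwU (by simpa using hu₀)
  refine ⟨{u₀ + μ • v}, by simpa using hwW, fun x hx => ?_⟩
  obtain ⟨u, hu, _, hv', rfl⟩ := Submodule.mem_sup.1 (h hx)
  obtain ⟨l, rfl⟩ := Submodule.mem_span_singleton.1 hv'
  have hdiff : u + l • v - (l * μ⁻¹) • (u₀ + μ • v) = u - (l * μ⁻¹) • u₀ := by
    rw [smul_add, smul_smul, mul_assoc, inv_mul_cancel₀ hμ, mul_one]
    abel
  refine Submodule.mem_sup.2 ⟨_, ⟨W.sub_mem hx (W.smul_mem _ hwW), ?_⟩, _,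
    Submodule.smul_mem _ (l * μ⁻¹) (Submodule.subset_span (by simp)), sub_add_cancel _ _⟩
  rw [SetLike.mem_coe, hdiff]
  exact U.sub_mem hu (U.smul_mem _ hu₀)

section LeftIdeal

variable {A : Type*}

section Semiring

variable [NonUnitalNonAssocSemiring A] [Module ℂ A]

theorem isLeftIdeal_leftIdealGen (S : Set A) : IsLeftIdeal (leftIdealGen S) := by
  intro c x hx
  exact Submodule.mem_sInf.2 fun J hJ => hJ.1 c x (Submodule.mem_sInf.1 hx J hJ)

theorem subset_leftIdealGen (S : Set A) : S ⊆ leftIdealGen S :=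
  fun _ hs => Submodule.mem_sInf.2 fun _ hJ => hJ.2 hs

theorem leftIdealGen_le {S : Set A} {J : Submodule ℂ A} (hJ : IsLeftIdeal J) (hS : S ⊆ J) :
    leftIdealGen S ≤ J :=
  sInf_le ⟨hJ, hS⟩

theorem leftIdealGen_mono {S T : Set A} (h : S ⊆ T) : leftIdealGen S ≤ leftIdealGen T :=
  leftIdealGen_le (isLeftIdeal_leftIdealGen T) (h.trans (subset_leftIdealGen T))

theorem span_le_leftIdealGen (S : Set A) : Submodule.span ℂ S ≤ leftIdealGen S :=
  Submodule.span_le.2 (subset_leftIdealGen S)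

theorem IsLeftIdeal.sup {P Q : Submodule ℂ A} (hP : IsLeftIdeal P) (hQ : IsLeftIdeal Q) :
    IsLeftIdeal (P ⊔ Q) := by
  intro c x hx
  obtain ⟨y, hy, z, hz, rfl⟩ := Submodule.mem_sup.1 hx
  rw [mul_add]
  exact Submodule.add_mem_sup (hP c y hy) (hQ c z hz)

theorem leftIdealGen_union (S T : Set A) :
    leftIdealGen (S ∪ T) = leftIdealGen S ⊔ leftIdealGen T :=
  le_antisymm
    (leftIdealGen_le ((isLeftIdeal_leftIdealGen S).sup (isLeftIdeal_leftIdealGen T))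
      (Set.union_subset ((subset_leftIdealGen S).trans (SetLike.coe_subset_coe.2 le_sup_left))
        ((subset_leftIdealGen T).trans (SetLike.coe_subset_coe.2 le_sup_right))))
    (sup_le (leftIdealGen_mono Set.subset_union_left) (leftIdealGen_mono Set.subset_union_right))

theorem IsLeftIdeal.isFGLeftIdeal_of_le_leftIdealGen {I : Submodule ℂ A} (hI : IsLeftIdeal I)
    {S : Finset A} (hS : ↑S ⊆ (I : Set A)) (h : I ≤ leftIdealGen ↑S) : IsFGLeftIdeal I :=
  ⟨S, hS, le_antisymm (leftIdealGen_le hI hS) h⟩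

theorem IsFGLeftIdeal.exists_finset_le_leftIdealGen_sup {P Q : Submodule ℂ A}
    (hQ : IsLeftIdeal Q) (h : IsFGLeftIdeal (P ⊔ Q)) :
    ∃ X : Finset A, ↑X ⊆ (P : Set A) ∧ P ⊔ Q ≤ leftIdealGen ↑X ⊔ Q := by
  classical
  obtain ⟨S, hSPQ, hS⟩ := h
  choose! p hp q hq hpq using fun s (hs : s ∈ S) => Submodule.mem_sup.1 (hSPQ hs)
  refine ⟨S.image p, by simpa [Set.subset_def] using hp, hS ▸ leftIdealGen_le
    ((isLeftIdeal_leftIdealGen _).sup hQ) fun s hs => ?_⟩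
  rw [← hpq s hs]
  exact Submodule.add_mem_sup (subset_leftIdealGen _ (by simpa using ⟨s, hs, rfl⟩)) (hq s hs)

end Semiring

variable [NonUnitalSemiring A] [Module ℂ A] [IsScalarTower ℂ A A]

theorem IsLeftIdeal.comap_mulRight {J : Submodule ℂ A} (hJ : IsLeftIdeal J) (a : A) :
    IsLeftIdeal (J.comap (LinearMap.mulRight ℂ a)) := by
  intro c x hx
  simpa [mul_assoc] using hJ c _ hx

theorem map_mulRight_leftIdealGen_le (S : Set A) (a : A) :
    (leftIdealGen S).map (LinearMap.mulRight ℂ a) ≤ leftIdealGen ((· * a) '' S) :=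
  Submodule.map_le_iff_le_comap.2 <|
    leftIdealGen_le ((isLeftIdeal_leftIdealGen _).comap_mulRight a)
      fun s hs => subset_leftIdealGen _ ⟨s, hs, rfl⟩

theorem isLeftIdeal_span_singleton_sup_range_mulRight [SMulCommClass ℂ A A] (a : A) :
    IsLeftIdeal ((ℂ ∙ a) ⊔ LinearMap.range (LinearMap.mulRight ℂ a)) := by
  intro c x hx
  obtain ⟨_, ha, _, ⟨d, rfl⟩, rfl⟩ := Submodule.mem_sup.1 hx
  obtain ⟨μ, rfl⟩ := Submodule.mem_span_singleton.1 ha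
  refine Submodule.mem_sup_right ⟨μ • c + c * d, ?_⟩
  simp [add_mul, mul_add, mul_assoc, smul_mul_assoc, mul_smul_comm]

end LeftIdeal

theorem not_maxNonFG_of_exists_general {A : Type*} [NonUnitalRing A] [Module ℂ A]
    [IsScalarTower ℂ A A] [SMulCommClass ℂ A A]
    (I : Submodule ℂ A)
    (a b : A) (ha : a ∉ I) (hb : b ∉ I) (hba : b * a ∈ I)
    (hIa : ∀ x ∈ I, x * a ∈ I) :
    ¬ IsMaxNonFG I := by
  classical
  rintro ⟨hI, hInfg, hmax⟩
  have fg_of_strict : ∀ J, IsLeftIdeal J → I ≤ J → ∀ x ∈ J, x ∉ I → IsFGLeftIdeal J :=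
    fun J hJ hIJ x hx hxI => by_contra fun hJfg => hxI (hmax J hJ hJfg hIJ ▸ hx)
  -- `U = Aa` and `L = A♯a`
  set U := LinearMap.range (LinearMap.mulRight ℂ a)
  set L := (ℂ ∙ a) ⊔ U
  have hL : IsLeftIdeal L := isLeftIdeal_span_singleton_sup_range_mulRight a
  obtain ⟨X, hXI, hX⟩ := (fg_of_strict (I ⊔ L) (hI.sup hL) le_sup_left a
    (Submodule.mem_sup_right (Submodule.mem_sup_left (Submodule.mem_span_singleton_self a))) ha
    ).exists_finset_le_leftIdealGen_sup hL
  obtain ⟨Y, hYK, hY⟩ := fg_of_strict _ (hI.comap_mulRight a) hIa b hba hb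
  obtain ⟨E, hEI, hE⟩ := Submodule.exists_finset_le_inf_sup_span_of_le_sup_span_singleton
    (W := L ⊓ I) (U := U) (v := a) (inf_le_left.trans (sup_comm _ _).le)
  have hLIU : L ⊓ I ⊓ U ≤ leftIdealGen ↑(Y.image (· * a)) :=
    calc L ⊓ I ⊓ U ≤ U ⊓ I := le_inf inf_le_right (inf_le_left.trans inf_le_right)
      _ = (I.comap (LinearMap.mulRight ℂ a)).map (LinearMap.mulRight ℂ a) :=
        (Submodule.map_comap_eq _ _).symm
      _ ≤ _ := by simpa [← hY] using map_mulRight_leftIdealGen_le (Y : Set A) a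
  refine hInfg (hI.isFGLeftIdeal_of_le_leftIdealGen (S := X ∪ Y.image (· * a) ∪ E) ?_ ?_)
  · simp only [Finset.coe_union, Finset.coe_image, Set.union_subset_iff, Set.image_subset_iff]
    exact ⟨⟨hXI, hYK⟩, hEI.trans inf_le_right⟩
  calc I ≤ (leftIdealGen ↑X ⊔ L) ⊓ I := le_inf (le_sup_left.trans hX) le_rfl
    _ = leftIdealGen ↑X ⊔ L ⊓ I := sup_inf_assoc_of_le _ (leftIdealGen_le hI hXI)
    _ ≤ leftIdealGen ↑X ⊔ (leftIdealGen ↑(Y.image (· * a)) ⊔ leftIdealGen ↑E) :=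
      sup_le_sup_left (hE.trans (sup_le_sup hLIU (span_le_leftIdealGen _))) _
    _ = leftIdealGen ↑(X ∪ Y.image (· * a) ∪ E) := by
      rw [Finset.coe_union, Finset.coe_union, leftIdealGen_union, leftIdealGen_union, sup_assoc]

/-- Theorem 2.3. Let `A` be an algebra and `I` a left ideal such
that there exist `a, b ∈ A \ I` with `ba ∈ I` and `Ia ⊆ I`. Then `I` is not maximal
among the non-finitely-generated left ideals of `A`. -/
theorem not_maxNonFG_of_exists {A : Type*} [NonUnitalRing A] [Module ℂ A]
    [IsScalarTower ℂ A A] [SMulCommClass ℂ A A]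
    (I : Submodule ℂ A) (hI : IsLeftIdeal I)
    (a b : A) (ha : a ∉ I) (hb : b ∉ I) (hba : b * a ∈ I)
    (hIa : ∀ x ∈ I, x * a ∈ I) :
    ¬ IsMaxNonFG I :=
  not_maxNonFG_of_exists_general I a b ha hb hba hIa
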